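/- Every tuple α ∈ {1,...,n}^n with α_1 = α_2, α_{i+1} ∈ {α_i − 1, α_i} for all i, and α_n = 2, has g(α) odd. -/

import Mathlib

/-- The first spot in the list `l` not in `occ`, if any. -/
def firstFree (occ : Finset ℕ) (l : List ℕ) : Option ℕ :=
  l.find? (fun s => decide (s ∉ occ))

/-- Run a parking simulation: each car is a pair (preference, coin); `step`
decides where a car parks (or `none` if it fails). Returns `true` iff all cars park. -/
def runPark (step : Finset ℕ → ℕ → Bool → Option ℕ) :
    List (ℕ × Bool) → Finset ℕ → Bool
  | [], _ => true
  | (a, b) :: rest, occ =>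
    match step occ a b with
    | none => false
    | some s => runPark step rest (insert s occ)

/-- Run a parking simulation, returning the final set of occupied spots
(cars that fail to park simply do not park). -/
def runOcc (step : Finset ℕ → ℕ → Bool → Option ℕ) :
    List (ℕ × Bool) → Finset ℕ → Finset ℕ
  | [], occ => occ
  | (a, b) :: rest, occ =>
    match step occ a b with
    | none => runOcc step rest occ
    | some s => runOcc step rest (insert s occ)

/-- Random-direction step on spots `1,…,n`: if the preferred spot `a` is free, take it;
otherwise if the coin says forward, take the first free spot among `a+1,…,n`;
otherwise take the first free spot among `a-1,…,1`. -/
def dirStep (n : ℕ) (occ : Finset ℕ) (a : ℕ) (fwd : Bool) : Option ℕ :=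
  if a ∉ occ then some a
  else if fwd then firstFree occ (List.range' (a + 1) (n - a))
  else firstFree occ ((List.range' 1 (a - 1)).reverse)

/-- Random `k`-Naples step on spots `1,…,n`: if the preferred spot `a` is free, take it;
otherwise, if the coin says to back up, check spots `a-1, a-2, …, max(a-k,1)` one by one
taking the first free one; if none (or if the coin says not to back up), take the first
free spot among `a+1,…,n`. -/
def naplesStep (n k : ℕ) (occ : Finset ℕ) (a : ℕ) (back : Bool) : Option ℕ :=
  if a ∉ occ then some a
  else
    let fwd := firstFree occ (List.range' (a + 1) (n - a))
    if back then
      match firstFree occ ((List.range' (max (a - k) 1) (min k (a - 1))).reverse) with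
      | some s => some s
      | none => fwd
    else fwd

/-- Circular random-direction step on spots `1,…,n+1` arranged in a circle:
if the preferred spot `a` is free, take it; otherwise search clockwise
(`a+1, a+2, …` wrapping around) or counterclockwise according to the coin. -/
def circStep (n : ℕ) (occ : Finset ℕ) (a : ℕ) (cw : Bool) : Option ℕ :=
  if a ∉ occ then some a
  else if cw then
    firstFree occ (List.range' (a + 1) (n + 1 - a) ++ List.range' 1 (a - 1))
  else
    firstFree occ ((List.range' 1 (a - 1)).reverse ++ (List.range' (a + 1) (n + 1 - a)).reverse)

/-- Whether all `n` cars with preferences `α` park in the random-direction model on spots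
`1,…,n` with coins `b` (`b i = true` means car `i` searches forward when its spot is taken). -/
def parksDir (n : ℕ) (α : Fin n → ℕ) (b : Fin n → Bool) : Bool :=
  runPark (dirStep n) (List.ofFn (fun i => (α i, b i))) ∅

/-- Whether all `n` cars with preferences `α` park in the `k`-Naples model on spots `1,…,n`
with coins `b` (`b i = true` means car `i` backs up when its spot is taken). -/
def parksNaples (n k : ℕ) (α : Fin n → ℕ) (b : Fin n → Bool) : Bool :=
  runPark (naplesStep n k) (List.ofFn (fun i => (α i, b i))) ∅

/-- The probability that all cars park in the random-direction model, where each car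
whose spot is taken independently searches forward with probability `p` and backward
with probability `1 - p`. -/
noncomputable def probDir (n : ℕ) (p : ℝ) (α : Fin n → ℕ) : ℝ :=
  ∑ b : Fin n → Bool,
    (∏ i, if b i then p else 1 - p) * (if parksDir n α b then 1 else 0)

/-- The probability that all cars park in the random `k`-Naples model, where each car
whose spot is taken independently backs up (up to) `k` spots with probability `p`. -/
noncomputable def probNaples (n k : ℕ) (p : ℝ) (α : Fin n → ℕ) : ℝ :=
  ∑ b : Fin n → Bool,
    (∏ i, if b i then p else 1 - p) * (if parksNaples n k α b then 1 else 0)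

/-- The deterministic 1-Naples simulation for choices `β = (β₂,…,βₙ) ∈ {0,1}^{n-1}`:
car `i ≥ 2` backs up one spot first iff `β i = false` (i.e. `βᵢ = 0`); car 1's choice
is irrelevant since its preferred spot is always free. -/
def parksUnder (n : ℕ) (α : Fin n → ℕ) (β : Fin (n - 1) → Bool) : Bool :=
  parksNaples n 1 α
    (fun i => if h : 0 < i.1 then !(β ⟨i.1 - 1, by have := i.2; omega⟩) else false)

/-- `g α`: the number of choice sequences `β ∈ {0,1}^{n-1}` under which `α` parks in the
deterministic 1-Naples simulation. -/
def g (n : ℕ) (α : Fin n → ℕ) : ℕ :=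
  (Finset.univ.filter (fun β : Fin (n - 1) → Bool => parksUnder n α β = true)).card

/-- `α` is a parking function: every car parks when each car whose preferred spot is taken
only searches forward. -/
def forwardParks (n : ℕ) (α : Fin n → ℕ) : Bool :=
  parksNaples n 0 α (fun _ => false)

/-- `α` is a 1-Naples parking function: every car parks when each car whose preferred spot
is taken always backs up one spot first. -/
def naplesParks (n : ℕ) (α : Fin n → ℕ) : Bool :=
  parksNaples n 1 α (fun _ => true)

/-- The expected number of random `k`-Naples parking functions on `n` cars. -/
noncomputable def T (k : ℕ) (p : ℝ) (n : ℕ) : ℝ :=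
  ∑ α : Fin n → Fin n, probNaples n k p (fun i => (α i).1 + 1)

/-- The staircase preference list: `m t` copies of `t`, then `m (t-1)` copies of `t-1`,
…, down to `m 2` copies of `2`. -/
def stair (t : ℕ) (m : ℕ → ℕ) : List ℕ :=
  ((List.range' 2 (t - 1)).reverse).flatMap (fun j => List.replicate (m j) j)

/-- The staircase condition on a preference tuple: `α₁ = α₂`, each entry decreases by
`0` or `1`, and `αₙ = 2`. -/
def Staircase {n : ℕ} (hn : 2 ≤ n) (α : Fin n → ℕ) : Prop :=
  α ⟨0, by omega⟩ = α ⟨1, by omega⟩ ∧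
  (∀ i : ℕ, (h : i + 1 < n) →
    α ⟨i + 1, h⟩ = α ⟨i, by omega⟩ ∨ α ⟨i + 1, h⟩ + 1 = α ⟨i, by omega⟩) ∧
  α ⟨n - 1, by omega⟩ = 2

/-- The number of 1-Naples parking functions on `n` cars. -/
def Nnum (n : ℕ) : ℕ :=
  (Finset.univ.filter
    (fun α : Fin n → Fin n => naplesParks n (fun i => (α i).1 + 1) = true)).card

/-! After car 1 parks at `α₁` the occupied spots always form an interval `[l, h]`, and the next
car prefers a spot in `[l - 1, h]`. If it prefers the free spot `l - 1` or a spot in `(l, h]`, both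
values of its coin lead to the same state, so such a state contributes an even number of successful
coin sequences. If it prefers exactly `l`, backing up to `l - 1` and parking at `h + 1` lead to
different states, and the staircase condition makes exactly one of them again a state whose next
car prefers the left end: the forward move if the following car also prefers `l`, the back-up move
if it prefers `l - 1`. Induction along the cars therefore gives an odd count; for the last car
(preference `2 = l`, spots `2, …, n` taken) only backing up to spot `1` succeeds. -/

open Finset List

def parkingCount (step : Finset ℕ → ℕ → Bool → Option ℕ) : List ℕ → Finset ℕ → ℕ
  | [], _ => 1
  | c :: cs, occ => ∑ b : Bool, (step occ c b).elim 0 (parkingCount step cs <| insert · occ)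

theorem parkingCount_cons (step : Finset ℕ → ℕ → Bool → Option ℕ) (c : ℕ) (cs : List ℕ)
    (occ : Finset ℕ) :
    parkingCount step (c :: cs) occ =
      (step occ c true).elim 0 (parkingCount step cs <| insert · occ) +
        (step occ c false).elim 0 (parkingCount step cs <| insert · occ) :=
  Fintype.sum_bool _

theorem even_parkingCount_cons {step : Finset ℕ → ℕ → Bool → Option ℕ} {c : ℕ} {cs : List ℕ}
    {occ : Finset ℕ} (h : step occ c true = step occ c false) :
    Even (parkingCount step (c :: cs) occ) := by
  rw [parkingCount_cons, h]
  exact Even.add_self _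

theorem parkingCount_ofFn (step : Finset ℕ → ℕ → Bool → Option ℕ) :
    ∀ {m : ℕ} (f : Fin m → ℕ) (occ : Finset ℕ),
      parkingCount step (ofFn f) occ =
        #{b : Fin m → Bool | runPark step (ofFn fun i => (f i, b i)) occ = true}
  | 0, f, occ => by simp [parkingCount, runPark]
  | m + 1, f, occ => by
    rw [card_filter, ← (Fin.consEquiv fun _ => Bool).sum_comp, Fintype.sum_prod_type,
      ofFn_succ, parkingCount]
    refine Fintype.sum_congr _ _ fun b => ?_
    simp only [Fin.consEquiv_apply, ofFn_succ, Fin.cons_zero, Fin.cons_succ, runPark]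
    rcases step occ (f 0) b with _ | s
    · simp
    · simp only [Option.elim_some, parkingCount_ofFn step (fun i => f i.succ)]
      rw [card_filter]

theorem firstFree_Icc_range' (l h : ℕ) :
    ∀ {s : ℕ} (k : ℕ), l ≤ s → s ≤ h + 1 →
      firstFree (Icc l h) (range' s k) = if h + 1 < s + k then some (h + 1) else none
  | s, 0, _, hsh => by simp [firstFree]; omega
  | s, k + 1, hls, hsh => by
    rw [range'_succ, firstFree, find?_cons]
    rcases hsh.eq_or_lt with rfl | hsh
    · simp
    · have hs : s ∈ Icc l h := mem_Icc.2 ⟨hls, by omega⟩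
      simp only [hs, not_true_eq_false, decide_false]
      rw [← firstFree, firstFree_Icc_range' l h k (by omega) hsh]
      simp only [← add_assoc, add_right_comm s 1 k]

theorem naplesStep_of_notMem {n k a : ℕ} {occ : Finset ℕ} (b : Bool) (ha : a ∉ occ) :
    naplesStep n k occ a b = some a := by
  simp [naplesStep, ha]

theorem naplesStep_one_Icc {n l h c : ℕ} (b : Bool) (hc : 2 ≤ c) (hlc : l ≤ c)
    (hch : c ≤ h) :
    naplesStep n 1 (Icc l h) c b =
      if b ∧ c = l then some (l - 1) else if h < n then some (h + 1) else none := by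
  have hfwd : firstFree (Icc l h) (range' (c + 1) (n - c)) =
      if h < n then some (h + 1) else none := by
    rw [firstFree_Icc_range' l h _ (by omega) (by omega)]
    exact if_congr (by omega) rfl rfl
  have hback : (range' (max (c - 1) 1) (min 1 (c - 1))).reverse = [c - 1] := by
    rw [max_eq_left (by omega), min_eq_left (by omega)]
    rfl
  have hbackFree : firstFree (Icc l h) [c - 1] = if c = l then some (l - 1) else none := by
    by_cases hcl : c = l <;> simp [firstFree, hcl] <;> omega
  have hmem : c ∈ Icc l h := mem_Icc.2 ⟨hlc, hch⟩
  simp only [naplesStep, hmem, not_true_eq_false, if_false, hback, hbackFree, hfwd]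
  by_cases hcl : c = l <;> cases b <;> simp [hcl]

def StairStep (x y : ℕ) : Prop := y = x ∨ y + 1 = x

theorem le_head_le_of_isChain_stairStep {b : ℕ} :
    ∀ {a : ℕ} {l : List ℕ}, IsChain StairStep (a :: l) →
      (a :: l).getLast (cons_ne_nil a l) = b → b ≤ a ∧ a ≤ b + l.length
  | a, [], _, hb => by simp at hb; omega
  | a, y :: l, hchain, hb => by
    rw [isChain_cons_cons] at hchain
    rw [getLast_cons_cons] at hb
    have := le_head_le_of_isChain_stairStep hchain.2 hb
    rcases hchain.1 with rfl | hy <;> simp only [length_cons] <;> omega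

theorem odd_parkingCount_naplesStep_one (n : ℕ) :
    ∀ {lo hi : ℕ} {cs : List ℕ}, IsChain StairStep (lo :: cs) →
      (lo :: cs).getLast (cons_ne_nil lo cs) = 2 → lo ≤ hi → hi + cs.length + 2 = n + lo →
      Odd (parkingCount (naplesStep n 1) (lo :: cs) (Icc lo hi))
  | lo, hi, [], _, hlast, hlohi, hlen => by
    obtain rfl : lo = 2 := hlast
    obtain rfl : hi = n := by simp at hlen; omega
    simp [parkingCount, naplesStep_one_Icc _ le_rfl le_rfl hlohi]
  | lo, hi, c :: cs, hchain, hlast, hlohi, hlen => by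
    have hlo := (le_head_le_of_isChain_stairStep hchain hlast).1
    rw [isChain_cons_cons] at hchain
    rw [getLast_cons_cons] at hlast
    have hc := le_head_le_of_isChain_stairStep hchain.2 hlast
    have ih := fun {hi'} => @odd_parkingCount_naplesStep_one n c hi' cs hchain.2 hlast
    simp only [length_cons] at hlen
    rw [parkingCount_cons, naplesStep_one_Icc _ hlo le_rfl hlohi,
      naplesStep_one_Icc _ hlo le_rfl hlohi]
    simp only [true_and, Bool.false_eq_true, false_and, if_true, if_false, Option.elim_some,
      insert_Icc_left_eq_Icc_sub_one (show lo - 1 ≤ hi by omega)]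
    rcases hchain.1 with rfl | hdrop
    · rw [if_pos (by omega), Option.elim_some, insert_Icc_right_eq_Icc_add_one (by omega)]
      refine Even.add_odd (even_parkingCount_cons ?_) (ih (by omega) (by omega))
      simp [naplesStep_one_Icc _ hlo (Nat.sub_le c 1) hlohi]
      omega
    · obtain rfl : c = lo - 1 := by omega
      refine (ih (by omega) (by omega)).add_even ?_
      split_ifs
      · rw [Option.elim_some, insert_Icc_right_eq_Icc_add_one (by omega)]
        exact even_parkingCount_cons <| by
          rw [naplesStep_of_notMem _ (by simp; omega), naplesStep_of_notMem _ (by simp; omega)]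
      · exact .zero

theorem parksUnder_eq_runPark (m : ℕ) (α : Fin (m + 2) → ℕ) (β : Fin (m + 1) → Bool) :
    parksUnder (m + 2) α β =
      runPark (naplesStep (m + 2) 1) (ofFn fun i => (α i.succ, !β i)) {α 0} := by
  rw [parksUnder, parksNaples, ofFn_succ, runPark, naplesStep_of_notMem _ (notMem_empty _)]
  simp [Fin.val_succ]

theorem g_eq_parkingCount (m : ℕ) (α : Fin (m + 2) → ℕ) :
    g (m + 2) α =
      parkingCount (naplesStep (m + 2) 1) (ofFn fun i : Fin (m + 1) => α i.succ) {α 0} := by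
  rw [g, parkingCount_ofFn]
  refine card_equiv (.piCongrRight fun _ => Equiv.boolNot) fun β => ?_
  simp [parksUnder_eq_runPark]

theorem Staircase.exists_ofFn_succ_eq {m : ℕ} {hn : 2 ≤ m + 2} {α : Fin (m + 2) → ℕ}
    (hα : Staircase hn α) :
    ∃ cs, ofFn (fun i : Fin (m + 1) => α i.succ) = α 0 :: cs ∧ IsChain StairStep (α 0 :: cs) ∧
      cs.length = m ∧ (α 0 :: cs).getLast (cons_ne_nil _ _) = 2 := by
  obtain ⟨h01, hstep, hlast⟩ := hα
  have hL : ofFn (fun i : Fin (m + 1) => α i.succ) =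
      α 0 :: ofFn fun i : Fin m => α i.succ.succ := by
    rw [ofFn_succ]
    exact congrArg (· :: _) h01.symm
  refine ⟨_, hL, hL ▸ isChain_ofFn.2 fun i hi => hstep (i + 1) (by omega), length_ofFn, ?_⟩
  simp only [← hL, getLast_ofFn]
  exact hlast

theorem stmt16_general (n : ℕ) (hn : 2 ≤ n) (α : Fin n → ℕ)
    (hA : Staircase hn α) :
    Odd (g n α) := by
  obtain ⟨m, rfl⟩ : ∃ m, n = m + 2 := ⟨n - 2, by omega⟩
  obtain ⟨cs, hL, hchain, hlen, hlast⟩ := hA.exists_ofFn_succ_eq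
  rw [g_eq_parkingCount, hL, ← Icc_self]
  exact odd_parkingCount_naplesStep_one _ hchain hlast le_rfl (by omega)

/-- Every staircase tuple has odd `g`. -/
theorem stmt16 (n : ℕ) (hn : 2 ≤ n) (α : Fin n → ℕ)
    (hα : ∀ i, 1 ≤ α i ∧ α i ≤ n) (hA : Staircase hn α) :
    Odd (g n α) :=
  stmt16_general n hn α hA
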